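/- Let k ≥ 4 be an even integer, let n ≥ k be a multiple of k/2, and let π be a permutation of N = {0,…,n−1}. If σ ≠ σ⁺ is an assignment satisfying Ψ₀^π, then there exists a subset M ⊆ {0,1,…,2n/k − 1} of size at least n/k such that for every ℓ ∈ M, σ assigns at least one variable of C^π_{ℓk/2} to FALSE. -/

import Mathlib

open Real Finset

attribute [local instance] Classical.propDecidable

abbrev Assignment (n : ℕ) := Fin n → Bool
abbrev Clause (n : ℕ) := Fin n → Option Bool
abbrev Cnf (n : ℕ) := List (Clause n)

/-- A clause is satisfied if it contains a true literal. -/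
def clauseSat {n : ℕ} (σ : Assignment n) (c : Clause n) : Prop :=
  ∃ i : Fin n, c i = some (σ i)

/-- An assignment satisfies a CNF formula if every clause contains a true literal. -/
def satCnf {n : ℕ} (σ : Assignment n) (Φ : Cnf n) : Prop :=
  ∀ c ∈ Φ, clauseSat σ c

/-- The set of variables appearing (negated or not) in a clause. -/
noncomputable def clauseVars {n : ℕ} (c : Clause n) : Finset (Fin n) :=
  Finset.univ.filter (fun i => (c i).isSome)

/-- The number of clauses of `Φ` in which variable `i` appears (negated or not). -/
noncomputable def degree {n : ℕ} (Φ : Cnf n) (i : Fin n) : ℕ :=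
  (Φ.filter (fun c => (c i).isSome)).length

/-- `Φ ∈ Φ_{n,k,d}`: every clause has exactly `k` distinct variables and every
variable appears in at most `d` clauses. -/
def memPhi (n k d : ℕ) (Φ : Cnf n) : Prop :=
  (∀ c ∈ Φ, (clauseVars c).card = k) ∧ ∀ i : Fin n, degree Φ i ≤ d

/-- The number of variables assigned TRUE. -/
noncomputable def mTrue {n : ℕ} (σ : Assignment n) : ℕ :=
  (Finset.univ.filter (fun i => σ i = true)).card

/-- The number of variables assigned FALSE. -/
noncomputable def nFalse {n : ℕ} (σ : Assignment n) : ℕ :=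
  (Finset.univ.filter (fun i => σ i = false)).card

/-- The (unnormalised) weight `e^{β·m(σ)}·𝟙[σ ⊨ Φ]`. -/
noncomputable def weight {n : ℕ} (β : ℝ) (Φ : Cnf n) (σ : Assignment n) : ℝ :=
  if satCnf σ Φ then Real.exp (β * mTrue σ) else 0

/-- The partition function. -/
noncomputable def Zfun {n : ℕ} (β : ℝ) (Φ : Cnf n) : ℝ :=
  ∑ τ : Assignment n, weight β Φ τ

/-- The weighted k-SAT probability of a single assignment. -/
noncomputable def prob {n : ℕ} (β : ℝ) (Φ : Cnf n) (σ : Assignment n) : ℝ :=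
  weight β Φ σ / Zfun β Φ

/-- The weighted k-SAT probability of an event. -/
noncomputable def probEvent {n : ℕ} (β : ℝ) (Φ : Cnf n) (E : Assignment n → Prop) : ℝ :=
  (∑ τ : Assignment n, if E τ then weight β Φ τ else 0) / Zfun β Φ

/-- `m ∈ Ξ_i^π`, i.e. `m = π((i+j) mod n)` for some `0 ≤ j ≤ k/2 − 1`. -/
def inXi (n k : ℕ) (pp : Equiv.Perm (Fin n)) (i : ℕ) (m : Fin n) : Prop :=
  ∃ j < k / 2, ((pp.symm m : Fin n) : ℕ) = (i + j) % n

/-- The length-`k` clause `W^π_{i,ℓ} ∨ Π^π_{i+k/2}`: `x_ℓ` appears positively, all other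
variables of `C_i^π` and all variables of `C_{i+k/2}^π` appear negatively. -/
noncomputable def gClause (n k : ℕ) (pp : Equiv.Perm (Fin n)) (i : ℕ) (ℓ : Fin n) : Clause n :=
  fun m =>
    if m = ℓ then some true
    else if inXi n k pp i m ∨ inXi n k pp (i + k / 2) m then some false
    else none

/-- The formula `Ψ₀^π`, with clause set `{ W^π_{i,ℓ} ∨ Π^π_{i+k/2} : i ∈ N, ℓ ∈ Ξ_i^π }`. -/
noncomputable def Psi0 (n k : ℕ) (pp : Equiv.Perm (Fin n)) : Cnf n :=
  (List.range n).flatMap fun i =>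
    (List.finRange n).filterMap fun ℓ =>
      if inXi n k pp i ℓ then some (gClause n k pp i ℓ) else none

/-! Read the variables in the cyclic order `π(0), π(1), …, π(n-1)`. If `x_{π(p)}` is FALSE, the
clause `W_{p,π(p)} ∨ Π_{p+k/2}` forces another FALSE variable among the next `k - 1` positions.
Starting from one FALSE variable and always jumping to the next one, every window of `k`
consecutive positions therefore contains a FALSE variable. Two cyclically adjacent blocks
`C_{ℓk/2}`, `C_{(ℓ+1)k/2}` form such a window, so no two adjacent blocks out of the `2n/k` are
all-TRUE, and at least half of the blocks contain a FALSE variable. -/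

-- Jump from the last `P`-point at or before `t`.
theorem Nat.exists_add_of_gap {P : ℕ → Prop} {L p t : ℕ}
    (hgap : ∀ q, P q → ∃ j, 0 < j ∧ j < L ∧ P (q + j)) (hp : P p) (hpt : p ≤ t) :
    ∃ j < L, P (t + j) := by
  classical
  set q := Nat.findGreatest P t
  obtain ⟨j, hj, hjL, hqj⟩ := hgap q (Nat.findGreatest_spec hpt hp)
  have hqt : q ≤ t := Nat.findGreatest_le t
  have htj : t < q + j := by
    by_contra! hle
    exact Nat.findGreatest_is_greatest (by omega) hle hqj
  exact ⟨q + j - t, by omega, by rwa [Nat.add_sub_cancel' htj.le]⟩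

theorem Function.Periodic.exists_add_of_gap {P : ℕ → Prop} {L n p : ℕ} (hn : 0 < n)
    (hper : Function.Periodic P n) (hgap : ∀ q, P q → ∃ j, 0 < j ∧ j < L ∧ P (q + j))
    (hp : P p) (t : ℕ) : ∃ j < L, P (t + j) := by
  obtain ⟨j, hjL, hj⟩ := Nat.exists_add_of_gap hgap hp (t := t + p * n) (by nlinarith)
  exact ⟨j, hjL, by rwa [add_right_comm, ← Nat.cast_id p, hper.nat_mul p] at hj⟩

theorem card_le_two_mul_card_filter_of_injOn {α : Type*} {s : Finset α} {f : α → α}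
    {P : α → Prop} [DecidablePred P] (hmaps : Set.MapsTo f s s) (hinj : Set.InjOn f s)
    (hP : ∀ x ∈ s, P x ∨ P (f x)) : #s ≤ 2 * #(s.filter P) := by
  have hle : #(s.filter (¬P ·)) ≤ #(s.filter P) := by
    refine card_le_card_of_injOn f (fun x hx => ?_) (hinj.mono (coe_subset.2 (filter_subset _ s)))
    obtain ⟨hxs, hPx⟩ := mem_filter.1 hx
    exact mem_filter.2 ⟨hmaps hxs, (hP x hxs).resolve_left hPx⟩
  have := card_filter_add_card_filter_not (s := s) P
  omega

theorem injOn_add_one_mod (B : ℕ) : Set.InjOn (fun ℓ => (ℓ + 1) % B) (range B) := by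
  intro a ha b hb hab
  exact (Nat.ModEq.add_right_cancel' 1 hab).eq_of_lt_of_lt (mem_range.1 ha) (mem_range.1 hb)

section Psi0

variable {n k : ℕ} {pp : Equiv.Perm (Fin n)} {σ : Assignment n}

/-- The variable `x_{π(i mod n)}` is FALSE under `σ`. -/
def FalseAtPos (pp : Equiv.Perm (Fin n)) (σ : Assignment n) (i : ℕ) : Prop :=
  ∃ m, σ m = false ∧ ((pp.symm m : Fin n) : ℕ) = i % n

theorem falseAtPos_congr {a b : ℕ} (h : a ≡ b [MOD n]) :
    FalseAtPos pp σ a ↔ FalseAtPos pp σ b := by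
  unfold FalseAtPos
  rw [h]

theorem falseAtPos_periodic : Function.Periodic (FalseAtPos pp σ) n :=
  fun i => propext (falseAtPos_congr (Nat.add_mod_right i n))

theorem falseAtPos_symm_apply {m : Fin n} (hm : σ m = false) :
    FalseAtPos pp σ (pp.symm m) :=
  ⟨m, hm, (Nat.mod_eq_of_lt (pp.symm m).isLt).symm⟩

theorem exists_inXi_false_iff {i : ℕ} :
    (∃ m, inXi n k pp i m ∧ σ m = false) ↔ ∃ j < k / 2, FalseAtPos pp σ (i + j) :=
  ⟨fun ⟨m, ⟨j, hj, hjm⟩, hm⟩ => ⟨j, hj, m, hm, hjm⟩,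
    fun ⟨j, hj, m, hm, hjm⟩ => ⟨m, ⟨j, hj, hjm⟩, hm⟩⟩

theorem gClause_mem_Psi0 {i : ℕ} {ℓ : Fin n} (hi : i < n) (hℓ : inXi n k pp i ℓ) :
    gClause n k pp i ℓ ∈ Psi0 n k pp :=
  List.mem_flatMap.2 ⟨i, List.mem_range.2 hi,
    List.mem_filterMap.2 ⟨ℓ, List.mem_finRange ℓ, if_pos hℓ⟩⟩

theorem exists_false_of_clauseSat_gClause {i : ℕ} {ℓ : Fin n}
    (hsat : clauseSat σ (gClause n k pp i ℓ)) (hℓ : σ ℓ = false) :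
    ∃ m ≠ ℓ, (inXi n k pp i m ∨ inXi n k pp (i + k / 2) m) ∧ σ m = false := by
  obtain ⟨m, hm⟩ := hsat
  unfold gClause at hm
  split_ifs at hm with hmℓ hin
  · subst hmℓ
    simp_all
  · exact ⟨m, hmℓ, hin, (Option.some_injective _ hm).symm⟩

theorem exists_falseAtPos_add (hk : 0 < k / 2) (hsat : satCnf σ (Psi0 n k pp)) {q : ℕ}
    (hq : FalseAtPos pp σ q) : ∃ j, 0 < j ∧ j < 2 * (k / 2) ∧ FalseAtPos pp σ (q + j) := by
  obtain ⟨m, hm, hmq⟩ := hq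
  have hi : inXi n k pp (q % n) m := ⟨0, hk, by rw [hmq, add_zero, Nat.mod_mod]⟩
  obtain ⟨m', hm'm, hin, hm'⟩ :=
    exists_false_of_clauseSat_gClause (hsat _ (gClause_mem_Psi0 (Nat.mod_lt q m.pos) hi)) hm
  rcases hin with ⟨j, hj, hjm⟩ | ⟨j, hj, hjm⟩
  · have hj0 : j ≠ 0 := by
      rintro rfl
      refine hm'm (pp.symm.injective (Fin.ext ?_))
      rw [hjm, hmq, add_zero, Nat.mod_mod]
    exact ⟨j, Nat.pos_of_ne_zero hj0, by omega, m', hm', by rw [hjm, Nat.mod_add_mod]⟩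
  · exact ⟨k / 2 + j, by omega, by omega, m', hm', by rw [hjm, add_assoc, Nat.mod_add_mod]⟩

theorem inXi_false_or_of_window {B ℓ : ℕ} (hB : n = k / 2 * B)
    (hw : ∃ j < 2 * (k / 2), FalseAtPos pp σ (ℓ * (k / 2) + j)) :
    (∃ m, inXi n k pp (ℓ * (k / 2)) m ∧ σ m = false) ∨
      ∃ m, inXi n k pp ((ℓ + 1) % B * (k / 2)) m ∧ σ m = false := by
  simp only [exists_inXi_false_iff]
  obtain ⟨j, hj, hF⟩ := hw
  by_cases hjk : j < k / 2
  · exact Or.inl ⟨j, hjk, hF⟩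
  · refine Or.inr ⟨j - k / 2, by omega, (falseAtPos_congr ?_).1 hF⟩
    have hmod : (ℓ + 1) % B * (k / 2) ≡ (ℓ + 1) * (k / 2) [MOD n] := by
      rw [hB, mul_comm (k / 2) B]
      exact (Nat.mod_modEq (ℓ + 1) B).mul_right' _
    convert (hmod.add_right (j - k / 2)).symm using 1
    rw [add_one_mul, add_assoc, Nat.add_sub_cancel' (by omega)]

end Psi0

theorem stmt6_general (k n : ℕ) (hke : Even k) (hdvd : k / 2 ∣ n)
    (pp : Equiv.Perm (Fin n))
    (σ : Assignment n) (hsat : satCnf σ (Psi0 n k pp)) (hne : σ ≠ fun _ => true) :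
    ∃ M : Finset ℕ, M ⊆ Finset.range (2 * n / k) ∧ (n : ℝ) / (k : ℝ) ≤ (M.card : ℝ) ∧
      ∀ ℓ ∈ M, ∃ m : Fin n, inXi n k pp (ℓ * (k / 2)) m ∧ σ m = false := by
  obtain ⟨m₀, hm₀⟩ : ∃ m, σ m = false := by simpa [funext_iff] using hne
  obtain ⟨B, hB⟩ := hdvd
  have hn : 0 < n := m₀.pos
  have hk : 2 * (k / 2) = k := Nat.two_mul_div_two_of_even hke
  have hk0 : 0 < k / 2 := Nat.pos_of_ne_zero fun h => by simp [h] at hB; omega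
  have hB0 : 0 < B := Nat.pos_of_ne_zero fun h => by simp [h] at hB; omega
  have hcover : ∀ t, ∃ j < 2 * (k / 2), FalseAtPos pp σ (t + j) :=
    falseAtPos_periodic.exists_add_of_gap hn (fun _ => exists_falseAtPos_add hk0 hsat)
      (falseAtPos_symm_apply hm₀)
  set M := (range B).filter fun ℓ => ∃ m, inXi n k pp (ℓ * (k / 2)) m ∧ σ m = false
  have hcard : #(range B) ≤ 2 * #M := card_le_two_mul_card_filter_of_injOn
    (fun ℓ _ => mem_coe.2 (mem_range.2 (Nat.mod_lt (ℓ + 1) hB0))) (injOn_add_one_mod B)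
    (fun ℓ _ => inXi_false_or_of_window hB (hcover _))
  have hnk : n * 2 = k * B := by
    rw [hB, mul_right_comm, mul_comm _ 2, hk]
  have hBk : 2 * n / k = B := by
    rw [mul_comm, hnk, Nat.mul_div_cancel_left B (by omega)]
  refine ⟨M, hBk ▸ filter_subset _ _, ?_, fun ℓ hℓ => (mem_filter.1 hℓ).2⟩
  rw [card_range] at hcard
  have hkpos : (0 : ℝ) < k := by exact_mod_cast hk0.trans_le (Nat.div_le_self k 2)
  have hnk' : (n : ℝ) * 2 = k * B := by exact_mod_cast hnk
  have hcard' : (B : ℝ) ≤ 2 * #M := by exact_mod_cast hcard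
  rw [div_le_iff₀ hkpos]
  nlinarith

/-- if `σ ≠ σ⁺` satisfies `Ψ₀^π`, then there is a set
`M ⊆ {0,…,2n/k−1}` of size at least `n/k` such that for each `ℓ ∈ M`, some variable of
`C^π_{ℓk/2}` is assigned FALSE by `σ`. -/
theorem stmt6 (k n : ℕ) (hk4 : 4 ≤ k) (hke : Even k) (hkn : k ≤ n) (hdvd : k / 2 ∣ n)
    (pp : Equiv.Perm (Fin n))
    (σ : Assignment n) (hsat : satCnf σ (Psi0 n k pp)) (hne : σ ≠ fun _ => true) :
    ∃ M : Finset ℕ, M ⊆ Finset.range (2 * n / k) ∧ (n : ℝ) / (k : ℝ) ≤ (M.card : ℝ) ∧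
      ∀ ℓ ∈ M, ∃ m : Fin n, inXi n k pp (ℓ * (k / 2)) m ∧ σ m = false :=
  stmt6_general k n hke hdvd pp σ hsat hne
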